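/- arXiv:2005.05260 — 4 statements merged into one kernel-verified Lean document; each statement's English description precedes it below -/
import Mathlib

section
/- Conversely, the fluctuation–dissipation relation is necessary for stationarity of the Gibbs density under the pairwise Fokker–Planck operator: if a, b are real numbers such that for every momentum vector p one has D_e[ a (e·v_ij) ρ ](p) + b (D_e² ρ)(p) = 0, then b = a/β. In particular, taking a = γ ω_D and b = (σ²/2) ω_R², stationarity of the Gibbs momentum density forces σ² ω_R² = 2 γ ω_D / β. -/
open scoped RealInnerProductSpace BigOperators

/-!
Evaluate the stationarity identity at `p = 0`. On the line `t ↦ t • u` through the pair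
direction the Gibbs density is the Gaussian `exp (-β t² / (2 m_ij))` and `e · v_ij = t / m_ij`,
so both the drift term and `D_e² ρ` at `0` are derivatives at `0` of functions
`A t exp (c t²)`, namely `a / m_ij` and `-β / m_ij`. Stationarity then reads
`(a - b β) / m_ij = 0`.
-/

lemma lineDeriv_smul_self_eq_deriv {E F : Type*} [AddCommGroup E] [Module ℝ E]
    [NormedAddCommGroup F] [NormedSpace ℝ F] {f : E → F} {u : E} {φ : ℝ → F}
    (hφ : ∀ t : ℝ, f (t • u) = φ t) (s : ℝ) :
    lineDeriv ℝ f (s • u) u = deriv φ s := by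
  have hline : (fun t : ℝ => f (s • u + t • u)) = fun t => φ (s + t) := by
    funext t
    rw [← add_smul, hφ]
  rw [lineDeriv, hline, deriv_comp_const_add, add_zero]

lemma hasDerivAt_exp_mul_sq (c s : ℝ) :
    HasDerivAt (fun t : ℝ => Real.exp (c * t ^ 2)) (2 * c * s * Real.exp (c * s ^ 2)) s := by
  convert ((hasDerivAt_pow 2 s).const_mul c).exp using 1
  ring

lemma deriv_mul_exp_mul_sq_zero (A c : ℝ) :
    deriv (fun t : ℝ => A * t * Real.exp (c * t ^ 2)) 0 = A := by
  have h := ((hasDerivAt_id (0 : ℝ)).const_mul A).mul (hasDerivAt_exp_mul_sq c 0)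
  simpa [Pi.mul_def] using h.deriv

lemma sum_apply_single_sub_single {ι E R : Type*} [Fintype ι] [DecidableEq ι]
    [AddCommGroup E] [AddCommMonoid R] (g : ι → E → R) (hg : ∀ k, g k 0 = 0)
    {i j : ι} (hij : i ≠ j) (x y : E) :
    ∑ k, g k ((Pi.single i x - Pi.single j y : ι → E) k) = g i x + g j (-y) := by
  rw [Finset.sum_eq_add i j hij (fun k _ hk => by simp [hk.1, hk.2, hg]) (by simp) (by simp)]
  simp [hij, hij.symm]

section PairLine

variable {d N : ℕ} (m : Fin N → ℝ) {i j : Fin N} (e : EuclideanSpace ℝ (Fin d))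

lemma sum_norm_sq_div_smul_pair (hij : i ≠ j) (t : ℝ) :
    ∑ k, ‖(t • (Pi.single i e - Pi.single j e) : Fin N → EuclideanSpace ℝ (Fin d)) k‖ ^ 2
        / (2 * m k) = ((m i)⁻¹ + (m j)⁻¹) * ‖e‖ ^ 2 / 2 * t ^ 2 := by
  rw [smul_sub, ← Pi.single_smul, ← Pi.single_smul,
    sum_apply_single_sub_single (fun k x => ‖x‖ ^ 2 / (2 * m k)) (by simp) hij]
  simp only [norm_neg, norm_smul, Real.norm_eq_abs, mul_pow, sq_abs]
  ring

lemma inner_relVel_smul_pair (hij : i ≠ j) (t : ℝ) :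
    ⟪e, (m i)⁻¹ • (t • (Pi.single i e - Pi.single j e) : Fin N → EuclideanSpace ℝ (Fin d)) i
      - (m j)⁻¹ • (t • (Pi.single i e - Pi.single j e) : Fin N → EuclideanSpace ℝ (Fin d)) j⟫
      = ((m i)⁻¹ + (m j)⁻¹) * ‖e‖ ^ 2 * t := by
  simp only [Pi.smul_apply, Pi.sub_apply, Pi.single_eq_same, Pi.single_eq_of_ne hij,
    Pi.single_eq_of_ne hij.symm, sub_zero, zero_sub, inner_sub_right, inner_smul_right,
    inner_neg_right, real_inner_self_eq_norm_sq]
  ring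

end PairLine

theorem dpd_pair_stationarity_forces_fluctuation_dissipation_general
    {d N : ℕ}
    (m : Fin N → ℝ) (hm : ∀ k, 0 < m k)
    (β : ℝ) (hβ : 0 < β)
    (i j : Fin N) (hij : i ≠ j)
    (e : EuclideanSpace ℝ (Fin d)) (he : ‖e‖ = 1)
    (a b : ℝ)
    -- the Gibbs momentum density
    (ρ : (Fin N → EuclideanSpace ℝ (Fin d)) → ℝ)
    (hρ : ρ = fun p => Real.exp (-β * ∑ k, ‖p k‖ ^ 2 / (2 * m k)))
    -- the pair direction: `e` in the `i`-th slot, `-e` in the `j`-th slot, `0` elsewhere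
    (u : Fin N → EuclideanSpace ℝ (Fin d))
    (hu : u = Pi.single i e - Pi.single j e)
    -- the relative velocity of the pair
    (v : (Fin N → EuclideanSpace ℝ (Fin d)) → EuclideanSpace ℝ (Fin d))
    (hv : v = fun p => (m i)⁻¹ • p i - (m j)⁻¹ • p j)
    -- stationarity of the Gibbs momentum density
    (hstat : ∀ p : Fin N → EuclideanSpace ℝ (Fin d),
      lineDeriv ℝ (fun p' => a * ⟪e, v p'⟫ * ρ p') p u
        + b * lineDeriv ℝ (fun p' => lineDeriv ℝ ρ p' u) p u = 0) :
    b = a / β := by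
  set M := (m i)⁻¹ + (m j)⁻¹
  have hM : 0 < M := add_pos (inv_pos.mpr (hm i)) (inv_pos.mpr (hm j))
  set c := -(β * M / 2)
  have hρ_line (t : ℝ) : ρ (t • u) = Real.exp (c * t ^ 2) := by
    simp only [hρ, hu, sum_norm_sq_div_smul_pair m e hij, he, c, M]
    ring_nf
  have hv_line (t : ℝ) : ⟪e, v (t • u)⟫ = M * t := by
    rw [hv, hu, inner_relVel_smul_pair m e hij, he, one_pow, mul_one]
  have hDρ_line (t : ℝ) : lineDeriv ℝ ρ (t • u) u = 2 * c * t * Real.exp (c * t ^ 2) := by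
    rw [lineDeriv_smul_self_eq_deriv hρ_line, (hasDerivAt_exp_mul_sq c t).deriv]
  have h_drift : lineDeriv ℝ (fun p' => a * ⟪e, v p'⟫ * ρ p') 0 u = a * M := by
    have hline (t : ℝ) : a * ⟪e, v (t • u)⟫ * ρ (t • u) = a * M * t * Real.exp (c * t ^ 2) := by
      rw [hv_line, hρ_line]
      ring
    rw [← zero_smul ℝ u, lineDeriv_smul_self_eq_deriv hline, deriv_mul_exp_mul_sq_zero]
  have h_diffusion : lineDeriv ℝ (fun p' => lineDeriv ℝ ρ p' u) 0 u = 2 * c := by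
    rw [← zero_smul ℝ u, lineDeriv_smul_self_eq_deriv hDρ_line, deriv_mul_exp_mul_sq_zero]
  have h0 := hstat 0
  rw [h_drift, h_diffusion] at h0
  have hab : M * (a - b * β) = 0 := by linear_combination h0
  rw [eq_div_iff hβ.ne']
  linarith [(mul_eq_zero.mp hab).resolve_left hM.ne']

/-- the fluctuation–dissipation relation is necessary for stationarity of the
Gibbs momentum density under the pairwise Fokker–Planck operator: if
`D_e[a (e·v_ij) ρ] + b D_e² ρ = 0` pointwise, then `b = a/β`. -/
theorem dpd_pair_stationarity_forces_fluctuation_dissipation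
    {d N : ℕ} (hd : 1 ≤ d) (hN : 2 ≤ N)
    (m : Fin N → ℝ) (hm : ∀ k, 0 < m k)
    (β : ℝ) (hβ : 0 < β)
    (i j : Fin N) (hij : i ≠ j)
    (e : EuclideanSpace ℝ (Fin d)) (he : ‖e‖ = 1)
    (a b : ℝ)
    -- the Gibbs momentum density
    (ρ : (Fin N → EuclideanSpace ℝ (Fin d)) → ℝ)
    (hρ : ρ = fun p => Real.exp (-β * ∑ k, ‖p k‖ ^ 2 / (2 * m k)))
    -- the pair direction: `e` in the `i`-th slot, `-e` in the `j`-th slot, `0` elsewhere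
    (u : Fin N → EuclideanSpace ℝ (Fin d))
    (hu : u = Pi.single i e - Pi.single j e)
    -- the relative velocity of the pair
    (v : (Fin N → EuclideanSpace ℝ (Fin d)) → EuclideanSpace ℝ (Fin d))
    (hv : v = fun p => (m i)⁻¹ • p i - (m j)⁻¹ • p j)
    -- stationarity of the Gibbs momentum density
    (hstat : ∀ p : Fin N → EuclideanSpace ℝ (Fin d),
      lineDeriv ℝ (fun p' => a * ⟪e, v p'⟫ * ρ p') p u
        + b * lineDeriv ℝ (fun p' => lineDeriv ℝ ρ p' u) p u = 0) :
    b = a / β :=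
  dpd_pair_stationarity_forces_fluctuation_dissipation_general m hm β hβ i j hij e he a b ρ hρ u hu
    v hv hstat
end

section
/- The canonical Gibbs density is a stationary solution of the DPD Fokker–Planck equation: if σ² = 2γ/β and ω_D(r) = ω_R(r)² for all r > 0, then at every phase point (q,p) with pairwise distinct positions, −Σ_i (p_i/m_i)·∇_{q_i} ρ_β(q,p) + Σ_i (∇_{q_i}U(q))·∇_{p_i} ρ_β(q,p) + Σ_{i<j} ( D_{ij}[ γ ω_D(r_ij) (e_ij·v_ij) ρ_β ](q,p) + (σ²/2) ω_R(r_ij)² (D_{ij}² ρ_β)(q,p) ) = 0. -/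
open scoped RealInnerProductSpace BigOperators

noncomputable section

/-- Unit separation vector `e_ij = (q_i − q_j)/|q_i − q_j|`. -/
def unitSep {d N : ℕ} (q : Fin N → EuclideanSpace ℝ (Fin d)) (i j : Fin N) :
    EuclideanSpace ℝ (Fin d) :=
  ‖q i - q j‖⁻¹ • (q i - q j)

/-- Pair direction in momentum space: `e_ij` in the `i`-th slot, `−e_ij` in the `j`-th slot,
`0` elsewhere. -/
def pairDir {d N : ℕ} (q : Fin N → EuclideanSpace ℝ (Fin d)) (i j : Fin N) :
    Fin N → EuclideanSpace ℝ (Fin d) :=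
  Pi.single i (unitSep q i j) - Pi.single j (unitSep q i j)

/-- Relative velocity `v_ij = p_i/m_i − p_j/m_j`. -/
def relVel {d N : ℕ} (m : Fin N → ℝ) (p : Fin N → EuclideanSpace ℝ (Fin d)) (i j : Fin N) :
    EuclideanSpace ℝ (Fin d) :=
  (m i)⁻¹ • p i - (m j)⁻¹ • p j

/-!
Along any momentum direction `u` the Gibbs density satisfies `D_u ρ = -β s_u ρ`, where
`s_u(p) = Σ_k ⟪p_k, u_k⟫ / m_k` is the derivative of the kinetic energy. Hence for each pair
`D²ρ = -β D(s ρ)`, and with `σ²β/2 = γ`, `ω_D = ω_R²` the dissipative term `γ ω_D D(s ρ)` and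
the fluctuating term `(σ²/2) ω_R² D²ρ` cancel. The Liouville terms cancel because `ρ` is a
function of the Hamiltonian, which is conserved by the Hamiltonian flow: moving `q_i` along
`p_i/m_i` and `p_i` along `∇_{q_i}U` change `ρ` by the same amount.
-/

section LineDeriv

variable {𝕜 E : Type*} [NontriviallyNormedField 𝕜] [AddCommGroup E] [Module 𝕜 E]

theorem HasDerivAt.comp_hasLineDerivAt {f : E → 𝕜} {f' : 𝕜} {x v : E} {g : 𝕜 → 𝕜} {g' : 𝕜}
    (hg : HasDerivAt g g' (f x)) (hf : HasLineDerivAt 𝕜 f f' x v) :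
    HasLineDerivAt 𝕜 (g ∘ f) (g' * f') x v := by
  have hg₀ : HasDerivAt g g' (f (x + (0 : 𝕜) • v)) := by simpa using hg
  exact hg₀.comp 0 hf

theorem lineDeriv_const_mul (c : 𝕜) (f : E → 𝕜) (x v : E) :
    lineDeriv 𝕜 (fun y => c * f y) x v = c * lineDeriv 𝕜 f x v :=
  congrFun (deriv_const_mul_field' c) 0

end LineDeriv

section Gibbs

variable {ι F Q : Type*} [Fintype ι] [NormedAddCommGroup F]

def kineticEnergy (m : ι → ℝ) (p : ι → F) : ℝ :=
  ∑ k, ‖p k‖ ^ 2 / (2 * m k)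

def gibbsDensity (β : ℝ) (m : ι → ℝ) (U : Q → ℝ) (q : Q) (p : ι → F) : ℝ :=
  Real.exp (-β * (kineticEnergy m p + U q))

theorem hasLineDerivAt_gibbsDensity_position [NormedAddCommGroup Q] [NormedSpace ℝ Q]
    (β : ℝ) (m : ι → ℝ) {U : Q → ℝ} {q : Q} (hU : DifferentiableAt ℝ U q) (p : ι → F) (v : Q) :
    HasLineDerivAt ℝ (fun q' => gibbsDensity β m U q' p)
      (-β * (fderiv ℝ U q v * gibbsDensity β m U q p)) q v := by
  have hexp : HasDerivAt (fun s => Real.exp (-β * (kineticEnergy m p + s)))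
      (Real.exp (-β * (kineticEnergy m p + U q)) * -β) (U q) := by
    simpa using (((hasDerivAt_id _).const_add (kineticEnergy m p)).const_mul (-β)).exp
  refine (hexp.comp_hasLineDerivAt (hU.hasFDerivAt.hasLineDerivAt v)).congr_deriv ?_
  rw [gibbsDensity]
  ring

variable [InnerProductSpace ℝ F]

theorem hasLineDerivAt_kineticEnergy (m : ι → ℝ) (p u : ι → F) :
    HasLineDerivAt ℝ (kineticEnergy m) (∑ k, ⟪p k, u k⟫ / m k) p u := by
  refine HasDerivAt.fun_sum fun k _ => ?_
  have hline : HasDerivAt (fun t : ℝ => p k + t • u k) (u k) 0 := by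
    simpa using ((hasDerivAt_id (0 : ℝ)).smul_const (u k)).const_add (p k)
  refine (hline.norm_sq.div_const (2 * m k)).congr_deriv ?_
  simp only [zero_smul, add_zero]
  rw [mul_div_mul_left _ _ two_ne_zero]

theorem hasLineDerivAt_gibbsDensity_momentum (β : ℝ) (m : ι → ℝ) (U : Q → ℝ) (q : Q)
    (p u : ι → F) :
    HasLineDerivAt ℝ (gibbsDensity β m U q)
      (-β * ((∑ k, ⟪p k, u k⟫ / m k) * gibbsDensity β m U q p)) p u := by
  have hexp : HasDerivAt (fun s => Real.exp (-β * (s + U q)))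
      (Real.exp (-β * (kineticEnergy m p + U q)) * -β) (kineticEnergy m p) := by
    simpa using (((hasDerivAt_id _).add_const (U q)).const_mul (-β)).exp
  refine (hexp.comp_hasLineDerivAt (hasLineDerivAt_kineticEnergy m p u)).congr_deriv ?_
  rw [gibbsDensity]
  ring

theorem lineDeriv_gibbsDensity_momentum (β : ℝ) (m : ι → ℝ) (U : Q → ℝ) (q : Q) (u : ι → F) :
    (fun p => lineDeriv ℝ (gibbsDensity β m U q) p u)
      = fun p => -β * ((∑ k, ⟪p k, u k⟫ / m k) * gibbsDensity β m U q p) :=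
  funext fun p => (hasLineDerivAt_gibbsDensity_momentum β m U q p u).lineDeriv

theorem gibbsDensity_fluctuation_dissipation {β γ σ : ℝ} (hβ : β ≠ 0)
    (hσ : σ ^ 2 = 2 * γ / β) (m : ι → ℝ) (U : Q → ℝ) (c : ℝ) (q : Q) (p u : ι → F) :
    lineDeriv ℝ (fun p' => γ * c * (∑ k, ⟪p' k, u k⟫ / m k) * gibbsDensity β m U q p') p u
      + σ ^ 2 / 2 * c * lineDeriv ℝ (fun p' => lineDeriv ℝ (gibbsDensity β m U q) p' u) p u
      = 0 := by
  have hassoc : (fun p' => γ * c * (∑ k, ⟪p' k, u k⟫ / m k) * gibbsDensity β m U q p')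
      = fun p' => γ * c * ((∑ k, ⟪p' k, u k⟫ / m k) * gibbsDensity β m U q p') :=
    funext fun _ => mul_assoc _ _ _
  rw [hassoc, lineDeriv_gibbsDensity_momentum, lineDeriv_const_mul, lineDeriv_const_mul, hσ]
  field_simp
  ring

variable [DecidableEq ι]

theorem sum_inner_single_div (m : ι → ℝ) (p : ι → F) (i : ι) (w : F) :
    ∑ k, ⟪p k, (Pi.single i w : ι → F) k⟫ / m k = ⟪p i, w⟫ / m i := by
  rw [Fintype.sum_eq_single i fun k hk => by simp [Pi.single_eq_of_ne hk], Pi.single_eq_same]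

theorem inner_gradient_update [CompleteSpace F] {f : (ι → F) → ℝ} {x : ι → F}
    (hf : DifferentiableAt ℝ f x) (i : ι) (w : F) :
    ⟪gradient (fun y => f (Function.update x i y)) (x i), w⟫ = fderiv ℝ f x (Pi.single i w) := by
  have hf' : HasFDerivAt f (fderiv ℝ f x) (Function.update x i (x i)) := by
    simpa using hf.hasFDerivAt
  rw [inner_gradient_left]
  change fderiv ℝ (f ∘ Function.update x i) (x i) w = _
  rw [(hf'.comp (x i) (hasFDerivAt_update x (x i))).fderiv, ContinuousLinearMap.comp_apply]
  congr 1
  ext k : 1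
  rcases eq_or_ne k i with rfl | hk <;> simp [*]

theorem lineDeriv_gibbsDensity_velocity_eq_force [CompleteSpace F] (β : ℝ) (m : ι → ℝ)
    {U : (ι → F) → ℝ} {q : ι → F} (hU : DifferentiableAt ℝ U q) (p : ι → F) (i : ι) :
    lineDeriv ℝ (fun q' => gibbsDensity β m U q' p) q (Pi.single i ((m i)⁻¹ • p i))
      = lineDeriv ℝ (gibbsDensity β m U q) p
          (Pi.single i (gradient (fun x => U (Function.update q i x)) (q i))) := by
  rw [(hasLineDerivAt_gibbsDensity_position β m hU p _).lineDeriv,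
    (hasLineDerivAt_gibbsDensity_momentum β m U q p _).lineDeriv, sum_inner_single_div,
    ← inner_gradient_update hU, real_inner_smul_right, real_inner_comm]
  ring

end Gibbs

theorem sum_inner_pairDir_div {d N : ℕ} (m : Fin N → ℝ) (q p : Fin N → EuclideanSpace ℝ (Fin d))
    (i j : Fin N) :
    ∑ k, ⟪p k, pairDir q i j k⟫ / m k = ⟪unitSep q i j, relVel m p i j⟫ := by
  simp only [pairDir, Pi.sub_apply, inner_sub_right, sub_div, Finset.sum_sub_distrib,
    sum_inner_single_div, relVel, real_inner_smul_right, real_inner_comm (p _)]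
  ring

theorem dpd_gibbs_stationary_fokker_planck_general
    {d N : ℕ}
    (m : Fin N → ℝ)
    (β γ σ : ℝ) (hβ : 0 < β)
    (U : (Fin N → EuclideanSpace ℝ (Fin d)) → ℝ) (hU : Differentiable ℝ U)
    (ωD ωR : ℝ → ℝ)
    (hσ : σ ^ 2 = 2 * γ / β)
    (hw : ∀ r : ℝ, 0 < r → ωD r = ωR r ^ 2)
    -- the Gibbs (canonical) density `ρ_β = exp(−β H)`
    (ρ : (Fin N → EuclideanSpace ℝ (Fin d)) → (Fin N → EuclideanSpace ℝ (Fin d)) → ℝ)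
    (hρ : ρ = fun q p => Real.exp (-β * (∑ k, ‖p k‖ ^ 2 / (2 * m k) + U q)))
    -- a phase point with pairwise distinct positions
    (q p : Fin N → EuclideanSpace ℝ (Fin d))
    (hq : ∀ i j : Fin N, i ≠ j → q i ≠ q j) :
    -- `−Σ_i (p_i/m_i)·∇_{q_i} ρ_β`
    -(∑ i, lineDeriv ℝ (fun q' => ρ q' p) q (Pi.single i ((m i)⁻¹ • p i)))
      -- `+ Σ_i (∇_{q_i}U)·∇_{p_i} ρ_β`
      + (∑ i, lineDeriv ℝ (fun p' => ρ q p') p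
          (Pi.single i (gradient (fun x => U (Function.update q i x)) (q i))))
      -- `+ Σ_{i<j} ( D_{ij}[γ ω_D(r_ij)(e_ij·v_ij) ρ_β] + (σ²/2) ω_R(r_ij)² D_{ij}² ρ_β )`
      + (∑ i, ∑ j, if i < j then
          lineDeriv ℝ
              (fun p' => γ * ωD ‖q i - q j‖ * ⟪unitSep q i j, relVel m p' i j⟫ * ρ q p')
              p (pairDir q i j)
            + σ ^ 2 / 2 * ωR ‖q i - q j‖ ^ 2 *
              lineDeriv ℝ (fun p' => lineDeriv ℝ (fun p'' => ρ q p'') p' (pairDir q i j))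
                p (pairDir q i j)
          else 0)
      = 0 := by
  obtain rfl : ρ = gibbsDensity β m U := hρ
  rw [Finset.sum_congr rfl fun i _ => lineDeriv_gibbsDensity_velocity_eq_force β m (hU q) p i,
    neg_add_cancel, zero_add]
  refine Finset.sum_eq_zero fun i _ => Finset.sum_eq_zero fun j _ => ?_
  split_ifs with hij
  · rw [hw _ (norm_pos_iff.2 (sub_ne_zero.2 (hq i j hij.ne)))]
    simp only [← sum_inner_pairDir_div]
    exact gibbsDensity_fluctuation_dissipation hβ.ne' hσ m U _ q p _
  · rfl

/-- the canonical Gibbs density is a stationary solution of the DPD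
Fokker–Planck equation, given `σ² = 2γ/β` and `ω_D(r) = ω_R(r)²` for all `r > 0`. -/
theorem dpd_gibbs_stationary_fokker_planck
    {d N : ℕ} (hd : 1 ≤ d) (hN : 2 ≤ N)
    (m : Fin N → ℝ) (hm : ∀ k, 0 < m k)
    (β γ σ : ℝ) (hβ : 0 < β) (hγ : 0 < γ)
    (U : (Fin N → EuclideanSpace ℝ (Fin d)) → ℝ) (hU : Differentiable ℝ U)
    (ωD ωR : ℝ → ℝ)
    (hσ : σ ^ 2 = 2 * γ / β)
    (hw : ∀ r : ℝ, 0 < r → ωD r = ωR r ^ 2)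
    -- the Gibbs (canonical) density `ρ_β = exp(−β H)`
    (ρ : (Fin N → EuclideanSpace ℝ (Fin d)) → (Fin N → EuclideanSpace ℝ (Fin d)) → ℝ)
    (hρ : ρ = fun q p => Real.exp (-β * (∑ k, ‖p k‖ ^ 2 / (2 * m k) + U q)))
    -- a phase point with pairwise distinct positions
    (q p : Fin N → EuclideanSpace ℝ (Fin d))
    (hq : ∀ i j : Fin N, i ≠ j → q i ≠ q j) :
    -- `−Σ_i (p_i/m_i)·∇_{q_i} ρ_β`
    -(∑ i, lineDeriv ℝ (fun q' => ρ q' p) q (Pi.single i ((m i)⁻¹ • p i)))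
      -- `+ Σ_i (∇_{q_i}U)·∇_{p_i} ρ_β`
      + (∑ i, lineDeriv ℝ (fun p' => ρ q p') p
          (Pi.single i (gradient (fun x => U (Function.update q i x)) (q i))))
      -- `+ Σ_{i<j} ( D_{ij}[γ ω_D(r_ij)(e_ij·v_ij) ρ_β] + (σ²/2) ω_R(r_ij)² D_{ij}² ρ_β )`
      + (∑ i, ∑ j, if i < j then
          lineDeriv ℝ
              (fun p' => γ * ωD ‖q i - q j‖ * ⟪unitSep q i j, relVel m p' i j⟫ * ρ q p')
              p (pairDir q i j)
            + σ ^ 2 / 2 * ωR ‖q i - q j‖ ^ 2 *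
              lineDeriv ℝ (fun p' => lineDeriv ℝ (fun p'' => ρ q p'') p' (pairDir q i j))
                p (pairDir q i j)
          else 0)
      = 0 :=
  dpd_gibbs_stationary_fokker_planck_general m β γ σ hβ U hU ωD ωR hσ hw ρ hρ q p hq
end
end

section
/- Baker–Campbell–Hausdorff expansion for a successive pairwise splitting: let 𝔸 be a complete normed algebra over ℝ (a Banach algebra) and O₁, …, O_m ∈ 𝔸. Then, as t → 0, the ordered product of exponentials satisfies ‖ exp(t O₁) · exp(t O₂) ⋯ exp(t O_m) − exp( t (O₁ + ⋯ + O_m) + (t²/2) Σ_{1 ≤ k < l ≤ m} (O_k O_l − O_l O_k) ) ‖ = O(t³); that is, the difference is big-O of t³ in the filter of neighbourhoods of 0. -/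
/-! Say that `f` has second-order expansion `(a₀, a₁, a₂)` at `0` if
`f t = a₀ + t a₁ + t² a₂ + O(t³)`. Such expansions multiply like polynomials truncated at degree
two, and the Taylor bound `exp x = 1 + x + x²/2 + O(‖x‖³)` shows that `exp ∘ z` has expansion
`(1, a₁, a₁²/2 + a₂)` whenever `z` has `(0, a₁, a₂)`. By induction on `m`, the product
`exp(tO₁) ⋯ exp(tO_m)` has expansion `(1, S, Σ_k O_k²/2 + Σ_{k<l} O_k O_l)` with `S = Σ_k O_k`,
and this second coefficient is `(S² + Σ_{k<l} [O_k, O_l]) / 2`, which is also the one of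
`exp(tS + (t²/2) Σ_{k<l} [O_k, O_l])`. Two functions with the same expansion differ by `O(t³)`. -/

open Asymptotics Filter NormedSpace Topology

section SecondOrderExpansion

variable {𝕜 E : Type*} [NontriviallyNormedField 𝕜] [NormedAddCommGroup E] [NormedSpace 𝕜 E]

theorem isBigO_pow_pow_nhds_zero {k n : ℕ} (hkn : k ≤ n) :
    (fun t : 𝕜 => t ^ n) =O[𝓝 0] fun t => t ^ k := by
  rcases hkn.eq_or_lt with rfl | hlt
  · exact isBigO_refl _ _
  · exact (isLittleO_pow_pow hlt).isBigO

theorem isBigO_pow_smul_nhds_zero {k n : ℕ} (hkn : k ≤ n) (c : E) :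
    (fun t : 𝕜 => t ^ n • c) =O[𝓝 0] fun t => t ^ k := by
  simpa using (isBigO_pow_pow_nhds_zero (𝕜 := 𝕜) hkn).smul
    (isBigO_const_const c (one_ne_zero (α := 𝕜)) _)

variable (𝕜) in
def HasSecondOrderExpansion (f : 𝕜 → E) (a₀ a₁ a₂ : E) : Prop :=
  (fun t => f t - (a₀ + t • a₁ + t ^ 2 • a₂)) =O[𝓝 0] fun t => t ^ 3

namespace HasSecondOrderExpansion

variable {f g : 𝕜 → E} {a₀ a₁ a₂ b₀ b₁ b₂ : E}

theorem of_eq (h : ∀ t, f t = a₀ + t • a₁ + t ^ 2 • a₂) :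
    HasSecondOrderExpansion 𝕜 f a₀ a₁ a₂ :=
  (isBigO_zero _ _).congr_left fun t => by simp [h]

theorem const (c : E) : HasSecondOrderExpansion 𝕜 (fun _ => c) c 0 0 :=
  of_eq fun _ => by simp

theorem add (hf : HasSecondOrderExpansion 𝕜 f a₀ a₁ a₂)
    (hg : HasSecondOrderExpansion 𝕜 g b₀ b₁ b₂) :
    HasSecondOrderExpansion 𝕜 (fun t => f t + g t) (a₀ + b₀) (a₁ + b₁) (a₂ + b₂) :=
  (IsBigO.add hf hg).congr_left fun t => by simp only [smul_add]; abel

theorem add_isBigO (hf : HasSecondOrderExpansion 𝕜 f a₀ a₁ a₂)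
    (hg : g =O[𝓝 0] fun t => t ^ 3) :
    HasSecondOrderExpansion 𝕜 (fun t => f t + g t) a₀ a₁ a₂ :=
  (IsBigO.add hf hg).congr_left fun _ => sub_add_eq_add_sub ..

theorem const_smul (hf : HasSecondOrderExpansion 𝕜 f a₀ a₁ a₂) (c : 𝕜) :
    HasSecondOrderExpansion 𝕜 (fun t => c • f t) (c • a₀) (c • a₁) (c • a₂) :=
  (IsBigO.const_smul_left hf c).congr_left fun t => by
    simp only [Pi.smul_apply, smul_add, smul_sub, smul_comm c]

theorem isBigO_sub (hf : HasSecondOrderExpansion 𝕜 f a₀ a₁ a₂)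
    (hg : HasSecondOrderExpansion 𝕜 g a₀ a₁ a₂) :
    (fun t => f t - g t) =O[𝓝 0] fun t => t ^ 3 :=
  (IsBigO.sub hf hg).congr_left fun t => by abel

theorem tendsto (hf : HasSecondOrderExpansion 𝕜 f a₀ a₁ a₂) : Tendsto f (𝓝 0) (𝓝 a₀) := by
  have hrem : Tendsto (fun t => f t - (a₀ + t • a₁ + t ^ 2 • a₂)) (𝓝 0) (𝓝 0) :=
    hf.trans_tendsto (by simpa using (continuous_pow 3).tendsto (0 : 𝕜))
  have hpoly : Tendsto (fun t : 𝕜 => a₀ + t • a₁ + t ^ 2 • a₂) (𝓝 0) (𝓝 a₀) := by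
    simpa using (by fun_prop : Continuous fun t : 𝕜 => a₀ + t • a₁ + t ^ 2 • a₂).tendsto 0
  simpa using hrem.add hpoly

theorem isBigO_id (hf : HasSecondOrderExpansion 𝕜 f 0 a₁ a₂) : f =O[𝓝 0] fun t => t := by
  have h : (fun t => f t - (0 + t • a₁ + t ^ 2 • a₂) + (t ^ 1 • a₁ + t ^ 2 • a₂))
      =O[𝓝 0] fun t => t ^ 1 :=
    (IsBigO.trans hf (isBigO_pow_pow_nhds_zero (by norm_num))).add
      ((isBigO_pow_smul_nhds_zero le_rfl a₁).add (isBigO_pow_smul_nhds_zero (by norm_num) a₂))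
  simpa using h

end HasSecondOrderExpansion

theorem HasSecondOrderExpansion.mul {A : Type*} [NormedRing A] [NormedAlgebra 𝕜 A] {f g : 𝕜 → A}
    {a₀ a₁ a₂ b₀ b₁ b₂ : A}
    (hf : HasSecondOrderExpansion 𝕜 f a₀ a₁ a₂) (hg : HasSecondOrderExpansion 𝕜 g b₀ b₁ b₂) :
    HasSecondOrderExpansion 𝕜 (fun t => f t * g t)
      (a₀ * b₀) (a₀ * b₁ + a₁ * b₀) (a₀ * b₂ + a₁ * b₁ + a₂ * b₀) := by
  set p : 𝕜 → A := fun t => a₀ + t • a₁ + t ^ 2 • a₂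
  set q : 𝕜 → A := fun t => b₀ + t • b₁ + t ^ 2 • b₂
  have hp_bdd : p =O[𝓝 0] fun _ => (1 : 𝕜) :=
    (HasSecondOrderExpansion.of_eq fun _ => rfl).tendsto.isBigO_one 𝕜
  have hg_bdd : g =O[𝓝 0] fun _ => (1 : 𝕜) := hg.tendsto.isBigO_one 𝕜
  have hpq : (fun t => p t * q t - ((a₀ * b₀) + t • (a₀ * b₁ + a₁ * b₀) +
      t ^ 2 • (a₀ * b₂ + a₁ * b₁ + a₂ * b₀))) =O[𝓝 0] fun t => t ^ 3 := by
    refine ((isBigO_pow_smul_nhds_zero le_rfl (a₁ * b₂ + a₂ * b₁)).add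
      (isBigO_pow_smul_nhds_zero (n := 4) (by norm_num) (a₂ * b₂))).congr_left fun t => ?_
    simp only [p, q, add_mul, mul_add, smul_mul_assoc, mul_smul_comm]
    module
  have hf' : (fun t => f t - p t) =O[𝓝 0] fun t => t ^ 3 := hf
  have hg' : (fun t => g t - q t) =O[𝓝 0] fun t => t ^ 3 := hg
  have hfg : (fun t => (f t - p t) * g t) =O[𝓝 0] fun t => t ^ 3 := by
    simpa using hf'.mul hg_bdd
  have hpg : (fun t => p t * (g t - q t)) =O[𝓝 0] fun t => t ^ 3 := by
    simpa using hp_bdd.mul hg'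
  refine ((hfg.add hpg).add hpq).congr_left fun t => ?_
  simp only [sub_mul, mul_sub]
  abel

end SecondOrderExpansion

section Exp

variable {𝕂 A : Type*} [RCLike 𝕂] [NormedRing A] [NormedAlgebra 𝕂 A] [CompleteSpace A]

variable (𝕂) in
theorem isBigO_exp_sub_quadratic :
    (fun x : A => exp x - (1 + x + (2⁻¹ : 𝕂) • (x * x))) =O[𝓝 0] fun x => ‖x‖ ^ 3 := by
  have hpartialSum : ∀ x : A, (expSeries 𝕂 A).partialSum 3 x = 1 + x + (2⁻¹ : 𝕂) • (x * x) := by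
    intro x
    simp [FormalMultilinearSeries.partialSum, Finset.sum_range_succ, expSeries_apply_eq,
      Nat.factorial, pow_two]
  simpa [hpartialSum] using
    (exp_hasFPowerSeriesAt_zero (𝕂 := 𝕂) (𝔸 := A)).isBigO_sub_partialSum_pow 3

theorem HasSecondOrderExpansion.exp {z : 𝕂 → A} {a₁ a₂ : A}
    (hz : HasSecondOrderExpansion 𝕂 z 0 a₁ a₂) :
    HasSecondOrderExpansion 𝕂 (fun t => exp (z t)) 1 a₁ ((2⁻¹ : 𝕂) • (a₁ * a₁) + a₂) := by
  have hquad : HasSecondOrderExpansion 𝕂 (fun t => 1 + z t + (2⁻¹ : 𝕂) • (z t * z t))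
      1 a₁ ((2⁻¹ : 𝕂) • (a₁ * a₁) + a₂) := by
    convert ((HasSecondOrderExpansion.const 1).add hz).add ((hz.mul hz).const_smul (2⁻¹ : 𝕂))
      using 1 <;> simp [add_comm]
  have hrem : (fun t => NormedSpace.exp (z t) - (1 + z t + (2⁻¹ : 𝕂) • (z t * z t))) =O[𝓝 0]
      fun t => t ^ 3 :=
    ((isBigO_exp_sub_quadratic 𝕂).comp_tendsto hz.tendsto).trans (hz.isBigO_id.norm_left.pow 3)
  simpa using hquad.add_isBigO hrem

end Exp

def pairwiseCommutatorSum {R : Type*} [Ring R] {m : ℕ} (O : Fin m → R) : R :=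
  ∑ k, ∑ l, if k < l then O k * O l - O l * O k else 0

theorem pairwiseCommutatorSum_succ {R : Type*} [Ring R] {m : ℕ} (O : Fin (m + 1) → R) :
    pairwiseCommutatorSum O = O 0 * (∑ k : Fin m, O k.succ) - (∑ k : Fin m, O k.succ) * O 0 +
      pairwiseCommutatorSum fun k => O k.succ := by
  simp only [pairwiseCommutatorSum, Fin.sum_univ_succ, lt_irrefl, if_false, zero_add,
    Fin.succ_pos, if_true, Fin.succ_lt_succ_iff, not_lt_of_gt (Fin.succ_pos _)]
  rw [Finset.sum_sub_distrib, ← Finset.mul_sum, ← Finset.sum_mul]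

theorem hasSecondOrderExpansion_prod_ofFn_exp {𝕂 A : Type*} [RCLike 𝕂] [NormedRing A]
    [NormedAlgebra 𝕂 A] [CompleteSpace A] {m : ℕ} (O : Fin m → A) :
    HasSecondOrderExpansion 𝕂 (fun t => (List.ofFn fun k => exp (t • O k)).prod) 1 (∑ k, O k)
      ((2⁻¹ : 𝕂) • ((∑ k, O k) * (∑ k, O k) + pairwiseCommutatorSum O)) := by
  induction m with
  | zero => simpa [pairwiseCommutatorSum] using HasSecondOrderExpansion.const (𝕜 := 𝕂) (1 : A)
  | succ m ih =>
    have hexp : HasSecondOrderExpansion 𝕂 (fun t => exp (t • O 0)) 1 (O 0)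
        ((2⁻¹ : 𝕂) • (O 0 * O 0) + 0) :=
      (HasSecondOrderExpansion.of_eq fun t => by simp).exp
    convert hexp.mul (ih fun k => O k.succ) using 1
    · simp [List.ofFn_succ]
    · simp
    · simp [Fin.sum_univ_succ, add_comm]
    · rw [pairwiseCommutatorSum_succ, Fin.sum_univ_succ]
      simp only [add_mul, mul_add, smul_add, smul_sub, mul_one, one_mul, add_zero]
      module

/-- Baker–Campbell–Hausdorff expansion for a successive pairwise splitting in a
Banach algebra: the ordered product `exp(tO₁)⋯exp(tO_m)` agrees with
`exp(t ΣO_k + (t²/2) Σ_{k<l} [O_k, O_l])` up to `O(t³)` as `t → 0`. -/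
theorem bch_successive_pairwise_splitting
    {𝔸 : Type*} [NormedRing 𝔸] [NormedAlgebra ℝ 𝔸] [CompleteSpace 𝔸]
    {m : ℕ} (O : Fin m → 𝔸) :
    (fun t : ℝ =>
        (List.ofFn fun k => NormedSpace.exp (t • O k)).prod -
          NormedSpace.exp (t • ∑ k, O k +
            (t ^ 2 / 2) • ∑ k, ∑ l, if k < l then O k * O l - O l * O k else 0))
      =O[nhds (0 : ℝ)] fun t => t ^ 3 := by
  set S := ∑ k, O k
  have hprod := hasSecondOrderExpansion_prod_ofFn_exp (𝕂 := ℝ) O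
  have hexp : HasSecondOrderExpansion ℝ
      (fun t => exp (t • S + (t ^ 2 / 2) • pairwiseCommutatorSum O))
      1 S ((2⁻¹ : ℝ) • (S * S) + (2⁻¹ : ℝ) • pairwiseCommutatorSum O) :=
    (HasSecondOrderExpansion.of_eq fun t => by simp [smul_smul, div_eq_mul_inv]).exp
  rw [smul_add] at hprod
  exact hprod.isBigO_sub hexp
end

section
/- The exact pairwise Ornstein–Uhlenbeck update of the ABOBA method preserves the Maxwellian distribution of the pair relative velocity: let β, γ, m_ij > 0, ω_R ≠ 0, ω_D = ω_R², σ² = 2γ/β, τ = γ ω_D / m_ij, and t ≥ 0. Then the pushforward, under the map (x, ξ) ↦ e^{−τ t} x + ξ, of the product of the Gaussian measure on ℝ with mean 0 and variance 1/(β m_ij) and the Gaussian measure on ℝ with mean 0 and variance (σ ω_R / m_ij)² (1 − e^{−2τ t})/(2τ), equals the Gaussian measure on ℝ with mean 0 and variance 1/(β m_ij). -/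
open MeasureTheory ProbabilityTheory

/-!
The update `x ↦ a x + ξ` with `ξ` independent of `x` maps the law of `x` to its image under
scaling by `a`, convolved with the law of `ξ`. For centred Gaussians this gives the Gaussian of
variance `a² v₁ + v₂`, so the Maxwellian `v₁` is invariant exactly when `v₂ = (1 - a²) v₁`.
With `a = e^{-τt}` this is the fluctuation–dissipation relation `σ² = 2γ/β`: the exact OU noise
variance `(σ ω_R / m)² (1 - e^{-2τt}) / (2τ)` equals `(1 - e^{-2τt}) / (β m)`.
-/

lemma gaussianReal_prod_map_const_mul_add (a m₁ m₂ : ℝ) (v₁ v₂ : NNReal) :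
    ((gaussianReal m₁ v₁).prod (gaussianReal m₂ v₂)).map (fun p : ℝ × ℝ => a * p.1 + p.2) =
      gaussianReal (a * m₁ + m₂) (⟨a ^ 2, sq_nonneg a⟩ * v₁ + v₂) := by
  have hscale : Measurable (fun x : ℝ => a * x) := measurable_const_mul a
  have hcomp : (fun p : ℝ × ℝ => a * p.1 + p.2) =
      (fun p : ℝ × ℝ => p.1 + p.2) ∘ Prod.map (fun x => a * x) id := rfl
  rw [hcomp, ← Measure.map_map measurable_add (hscale.prodMap measurable_id),
    ← Measure.map_prod_map _ _ hscale measurable_id, Measure.map_id,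
    gaussianReal_map_const_mul]
  exact gaussianReal_conv_gaussianReal

lemma gaussianReal_prod_map_const_mul_add_eq_self {a : ℝ} {v₁ v₂ : NNReal}
    (hv : (v₂ : ℝ) = (1 - a ^ 2) * v₁) :
    ((gaussianReal 0 v₁).prod (gaussianReal 0 v₂)).map (fun p : ℝ × ℝ => a * p.1 + p.2) =
      gaussianReal 0 v₁ := by
  rw [gaussianReal_prod_map_const_mul_add, mul_zero, add_zero]
  congr 1
  apply NNReal.eq
  change a ^ 2 * (v₁ : ℝ) + v₂ = v₁
  rw [hv]
  ring

lemma ou_noise_variance_eq {β γ mij ωR σ τ : ℝ} (hσ : σ ^ 2 = 2 * γ / β)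
    (hτ : τ = γ * ωR ^ 2 / mij) (t : ℝ) :
    (σ * ωR / mij) ^ 2 * (1 - Real.exp (-(2 * τ * t))) / (2 * τ) =
      (1 - Real.exp (-(τ * t)) ^ 2) * (1 / (β * mij)) := by
  rcases eq_or_ne τ 0 with rfl | hτ₀
  · simp -- both sides vanish, the left one through the junk value `x / 0 = 0`
  have hγ : γ ≠ 0 := by rintro rfl; simp [hτ] at hτ₀
  have hωR : ωR ≠ 0 := by rintro rfl; simp [hτ] at hτ₀
  have hmij : mij ≠ 0 := by rintro rfl; simp [hτ] at hτ₀
  have hexp : Real.exp (-(2 * τ * t)) = Real.exp (-(τ * t)) ^ 2 := by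
    rw [← Real.exp_nat_mul]; ring_nf
  rw [hexp, div_pow, mul_pow, hσ, hτ]
  field_simp

theorem aboba_pairwise_ou_preserves_maxwellian_general
    (β γ mij ωR ωD σ τ t : ℝ)
    (hωD : ωD = ωR ^ 2) (hσ : σ ^ 2 = 2 * γ / β)
    (hτ : τ = γ * ωD / mij)
    (v₁ v₂ : NNReal)
    (hv₁ : (v₁ : ℝ) = 1 / (β * mij))
    (hv₂ : (v₂ : ℝ) = (σ * ωR / mij) ^ 2 * (1 - Real.exp (-(2 * τ * t))) / (2 * τ)) :
    Measure.map (fun xξ : ℝ × ℝ => Real.exp (-(τ * t)) * xξ.1 + xξ.2)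
        ((gaussianReal 0 v₁).prod (gaussianReal 0 v₂)) = gaussianReal 0 v₁ := by
  subst hωD
  apply gaussianReal_prod_map_const_mul_add_eq_self
  rw [hv₂, hv₁, ou_noise_variance_eq hσ hτ]

/-- the exact pairwise Ornstein–Uhlenbeck update of the ABOBA method preserves
the Maxwellian distribution of the pair relative velocity: the pushforward, under
`(x, ξ) ↦ e^{−τt} x + ξ`, of the product of the Gaussian of variance `1/(β m_ij)` with the
Gaussian of variance `(σ ω_R/m_ij)² (1 − e^{−2τt})/(2τ)`, is the Gaussian of variance
`1/(β m_ij)`. -/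
theorem aboba_pairwise_ou_preserves_maxwellian
    (β γ mij ωR ωD σ τ t : ℝ)
    (hβ : 0 < β) (hγ : 0 < γ) (hmij : 0 < mij) (hωR : ωR ≠ 0)
    (hωD : ωD = ωR ^ 2) (hσ : σ ^ 2 = 2 * γ / β)
    (hτ : τ = γ * ωD / mij) (ht : 0 ≤ t)
    (v₁ v₂ : NNReal)
    (hv₁ : (v₁ : ℝ) = 1 / (β * mij))
    (hv₂ : (v₂ : ℝ) = (σ * ωR / mij) ^ 2 * (1 - Real.exp (-(2 * τ * t))) / (2 * τ)) :
    Measure.map (fun xξ : ℝ × ℝ => Real.exp (-(τ * t)) * xξ.1 + xξ.2)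
        ((gaussianReal 0 v₁).prod (gaussianReal 0 v₂)) = gaussianReal 0 v₁ :=
  aboba_pairwise_ou_preserves_maxwellian_general β γ mij ωR ωD σ τ t hωD hσ hτ v₁ v₂ hv₁ hv₂
end
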